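/- (i) For all a ∈ [0,1] and b ∈ (0,1), I(b) − I(a) − I′(b)(b − a) − √(2π)·(a − b)²/2 ≥ 0. (ii) The constant √(2π) is largest possible: for every k > √(2π) there exist a ∈ [0,1] and b ∈ (0,1) such that I(b) − I(a) − I′(b)(b − a) − k(a − b)²/2 < 0. -/

import Mathlib

/-- The standard Gaussian distribution function `Φ(x) = (2π)^{-1/2} ∫_{-∞}^x e^{-y²/2} dy`. -/
noncomputable def stdGaussCDF (x : ℝ) : ℝ :=
  ∫ y in Set.Iic x, Real.exp (-y ^ 2 / 2) / Real.sqrt (2 * Real.pi)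

/-- The Gaussian isoperimetric profile `I = φ ∘ Φ⁻¹` on `[0,1]`, with `I(0) = I(1) = 0`. -/
noncomputable def gaussI (p : ℝ) : ℝ :=
  if p = 0 ∨ p = 1 then 0
  else Real.exp (-(Function.invFun stdGaussCDF p) ^ 2 / 2) / Real.sqrt (2 * Real.pi)

/-!
On `(0, 1)` one has `I = φ ∘ Φ⁻¹`, `I' = -Φ⁻¹` and `I'' = -1 / I`. Since `I ≤ φ 0 = 1 / √(2π)`,
`I'' ≤ -√(2π)`, so `I(q) + √(2π) q² / 2` is concave on `(0, 1)` and lies below its tangent lines.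
At `b = Φ 0` the bound is attained, `I''(b) = -√(2π)`, so for `k > √(2π)` the function
`a ↦ I(a) - I'(b)(a - b) + k (a - b)² / 2` has a strict local minimum at `b`, which gives (ii).
-/

open Real Set Filter Topology MeasureTheory ProbabilityTheory

theorem ConcaveOn.le_add_mul_sub_of_hasDerivAt {S : Set ℝ} {f : ℝ → ℝ} {f' x y : ℝ}
    (hf : ConcaveOn ℝ S f) (hx : x ∈ S) (hy : y ∈ S) (hfx : HasDerivAt f f' x) :
    f y ≤ f x + f' * (y - x) := by
  rcases lt_trichotomy x y with hxy | rfl | hxy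
  · have := hf.slope_le_of_hasDerivAt hx hy hxy hfx
    rw [slope_def_field, div_le_iff₀ (sub_pos.2 hxy)] at this
    linarith
  · simp
  · have := hf.le_slope_of_hasDerivAt hy hx hxy hfx
    rw [slope_def_field, le_div_iff₀ (sub_pos.2 hxy)] at this
    linarith

theorem eventually_nhdsGT_lt_of_deriv_deriv_pos {f f' : ℝ → ℝ} {x₀ c : ℝ}
    (hf : ∀ᶠ x in 𝓝 x₀, HasDerivAt f (f' x) x) (hf' : HasDerivAt f' c x₀) (hc : 0 < c)
    (hcrit : f' x₀ = 0) : ∀ᶠ x in 𝓝[>] x₀, f x₀ < f x := by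
  have hslope : Tendsto (slope f' x₀) (𝓝[>] x₀) (𝓝 c) :=
    (hasDerivWithinAt_iff_tendsto_slope' self_notMem_Ioi).1 hf'.hasDerivWithinAt
  have hpos : ∀ᶠ x in 𝓝[>] x₀, 0 < f' x := by
    filter_upwards [hslope.eventually_const_lt hc, self_mem_nhdsWithin] with x hx (hx₀ : x₀ < x)
    rw [slope_def_field, hcrit, sub_zero] at hx
    exact (div_pos_iff_of_pos_right (sub_pos.2 hx₀)).1 hx
  obtain ⟨u, hu, hsub⟩ := mem_nhdsGT_iff_exists_Ioo_subset.1 hpos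
  obtain ⟨ε, hε, hball⟩ := Metric.eventually_nhds_iff_ball.1 hf
  filter_upwards [Ioo_mem_nhdsGT (lt_min hu (lt_add_of_pos_right x₀ hε))] with x hx
  have hderiv : ∀ y ∈ Icc x₀ x, HasDerivAt f (f' y) y := fun y hy => hball y <| by
    rw [Metric.mem_ball, dist_comm, Real.dist_eq, abs_lt]
    constructor <;> linarith [hy.1, hy.2, hx.2.trans_le (min_le_right _ _)]
  obtain ⟨ξ, hξ, hmvt⟩ := exists_hasDerivAt_eq_slope f f' hx.1
    (fun y hy => (hderiv y hy).continuousAt.continuousWithinAt)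
    (fun y hy => hderiv y (Ioo_subset_Icc_self hy))
  have : 0 < (f x - f x₀) / (x - x₀) :=
    hmvt ▸ hsub ⟨hξ.1, hξ.2.trans (hx.2.trans_le (min_le_left _ _))⟩
  linarith [(div_pos_iff_of_pos_right (sub_pos.2 hx.1)).1 this]

theorem hasDerivAt_mul_sq_div_two (c x : ℝ) : HasDerivAt (fun q => c * q ^ 2 / 2) (c * x) x :=
  (((hasDerivAt_pow 2 x).const_mul c).div_const 2).congr_deriv (by push_cast; ring)

local notation "φ" => gaussianPDFReal 0 1

theorem gaussianPDFReal_zero_one_apply (x : ℝ) : φ x = exp (-x ^ 2 / 2) / √(2 * π) := by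
  rw [gaussianPDFReal, NNReal.coe_one, mul_one, mul_one, sub_zero, inv_mul_eq_div]

theorem hasDerivAt_gaussianPDFReal_zero_one (x : ℝ) : HasDerivAt φ (-x * φ x) x := by
  have h := (((hasDerivAt_pow 2 x).const_mul (-1 / 2 : ℝ)).exp).div_const √(2 * π)
  have hφ : φ = fun y => exp (-1 / 2 * y ^ 2) / √(2 * π) :=
    funext fun y => by rw [gaussianPDFReal_zero_one_apply]; ring_nf
  rw [hφ]
  exact h.congr_deriv (by push_cast; ring)

theorem gaussianPDFReal_zero_one_le (x : ℝ) : φ x ≤ (√(2 * π))⁻¹ := by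
  rw [gaussianPDFReal_zero_one_apply, div_eq_inv_mul]
  exact mul_le_of_le_one_right (by positivity) (exp_le_one_iff.2 (by nlinarith [sq_nonneg x]))

theorem gaussianPDFReal_zero_one_apply_zero : φ 0 = (√(2 * π))⁻¹ := by
  simp [gaussianPDFReal_zero_one_apply]

theorem stdGaussCDF_eq_cdf : stdGaussCDF = cdf (gaussianReal 0 1) := by
  ext x
  rw [cdf_eq_real, measureReal_def, gaussianReal_apply_eq_integral _ one_ne_zero,
    ENNReal.toReal_ofReal (integral_nonneg (gaussianPDFReal_nonneg 0 1)), stdGaussCDF]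
  simp_rw [gaussianPDFReal_zero_one_apply]

theorem hasDerivAt_stdGaussCDF (x : ℝ) : HasDerivAt stdGaussCDF (φ x) x := by
  have hint : Integrable φ := integrable_gaussianPDFReal 0 1
  have hcont : Continuous φ := by unfold gaussianPDFReal; fun_prop
  have hsplit : stdGaussCDF = fun u => stdGaussCDF 0 + ∫ t in (0 : ℝ)..u, φ t := by
    funext u
    simp_rw [stdGaussCDF, ← gaussianPDFReal_zero_one_apply]
    rw [← intervalIntegral.integral_Iic_sub_Iic hint.integrableOn hint.integrableOn]
    ring
  rw [hsplit]
  exact (intervalIntegral.integral_hasDerivAt_right hint.intervalIntegrable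
    hcont.stronglyMeasurable.stronglyMeasurableAtFilter hcont.continuousAt).const_add _

theorem stdGaussCDF_strictMono : StrictMono stdGaussCDF :=
  strictMono_of_deriv_pos fun x =>
    (hasDerivAt_stdGaussCDF x).deriv ▸ gaussianPDFReal_pos 0 1 x one_ne_zero

theorem tendsto_stdGaussCDF_atBot : Tendsto stdGaussCDF atBot (𝓝 0) :=
  stdGaussCDF_eq_cdf ▸ tendsto_cdf_atBot _

theorem tendsto_stdGaussCDF_atTop : Tendsto stdGaussCDF atTop (𝓝 1) :=
  stdGaussCDF_eq_cdf ▸ tendsto_cdf_atTop _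

theorem stdGaussCDF_mem_Ioo (x : ℝ) : stdGaussCDF x ∈ Ioo 0 1 :=
  ⟨(stdGaussCDF_strictMono.monotone.le_of_tendsto tendsto_stdGaussCDF_atBot (x - 1)).trans_lt
      (stdGaussCDF_strictMono (sub_one_lt x)),
    (stdGaussCDF_strictMono (lt_add_one x)).trans_le
      (stdGaussCDF_strictMono.monotone.ge_of_tendsto tendsto_stdGaussCDF_atTop _)⟩

theorem surjOn_stdGaussCDF : SurjOn stdGaussCDF univ (Ioo 0 1) := by
  intro p hp
  obtain ⟨x₀, hx₀⟩ := (tendsto_stdGaussCDF_atBot.eventually_lt_const hp.1).exists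
  obtain ⟨x₁, hx₁⟩ := (tendsto_stdGaussCDF_atTop.eventually_const_lt hp.2).exists
  have hcont : Continuous stdGaussCDF :=
    continuous_iff_continuousAt.2 fun x => (hasDerivAt_stdGaussCDF x).continuousAt
  obtain ⟨x, hx⟩ := intermediate_value_univ x₀ x₁ hcont ⟨hx₀.le, hx₁.le⟩
  exact ⟨x, trivial, hx⟩

noncomputable def stdGaussQuantile : ℝ → ℝ := Function.invFun stdGaussCDF

theorem stdGaussCDF_stdGaussQuantile {p : ℝ} (hp : p ∈ Ioo 0 1) :
    stdGaussCDF (stdGaussQuantile p) = p :=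
  let ⟨x, _, hx⟩ := surjOn_stdGaussCDF hp
  Function.invFun_eq ⟨x, hx⟩

theorem stdGaussQuantile_stdGaussCDF (x : ℝ) : stdGaussQuantile (stdGaussCDF x) = x :=
  Function.leftInverse_invFun stdGaussCDF_strictMono.injective x

theorem continuousAt_stdGaussQuantile {p : ℝ} (hp : p ∈ Ioo 0 1) :
    ContinuousAt stdGaussQuantile p := by
  have hmono : StrictMonoOn stdGaussQuantile (Ioo 0 1) := fun a ha b hb hab => by
    rwa [← stdGaussCDF_strictMono.lt_iff_lt, stdGaussCDF_stdGaussQuantile ha,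
      stdGaussCDF_stdGaussQuantile hb]
  have himage : stdGaussQuantile '' Ioo 0 1 = univ :=
    eq_univ_of_forall fun x =>
      ⟨stdGaussCDF x, stdGaussCDF_mem_Ioo x, stdGaussQuantile_stdGaussCDF x⟩
  exact hmono.continuousAt_of_image_mem_nhds (Ioo_mem_nhds hp.1 hp.2) (himage ▸ univ_mem)

theorem hasDerivAt_stdGaussQuantile {p : ℝ} (hp : p ∈ Ioo 0 1) :
    HasDerivAt stdGaussQuantile (φ (stdGaussQuantile p))⁻¹ p :=
  (hasDerivAt_stdGaussCDF _).of_local_left_inverse (continuousAt_stdGaussQuantile hp)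
    (gaussianPDFReal_pos 0 1 _ one_ne_zero).ne' <| by
      filter_upwards [Ioo_mem_nhds hp.1 hp.2] with q hq using stdGaussCDF_stdGaussQuantile hq

theorem gaussI_eq {p : ℝ} (hp : p ∈ Ioo 0 1) : gaussI p = φ (stdGaussQuantile p) := by
  rw [gaussI, if_neg (by rintro (rfl | rfl) <;> simp at hp), gaussianPDFReal_zero_one_apply]
  rfl

theorem gaussI_pos {p : ℝ} (hp : p ∈ Ioo 0 1) : 0 < gaussI p :=
  gaussI_eq hp ▸ gaussianPDFReal_pos 0 1 _ one_ne_zero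

theorem gaussI_le {p : ℝ} (hp : p ∈ Ioo 0 1) : gaussI p ≤ (√(2 * π))⁻¹ :=
  gaussI_eq hp ▸ gaussianPDFReal_zero_one_le _

theorem gaussI_stdGaussCDF_zero : gaussI (stdGaussCDF 0) = (√(2 * π))⁻¹ := by
  rw [gaussI_eq (stdGaussCDF_mem_Ioo 0), stdGaussQuantile_stdGaussCDF,
    gaussianPDFReal_zero_one_apply_zero]

theorem hasDerivAt_gaussI {p : ℝ} (hp : p ∈ Ioo 0 1) :
    HasDerivAt gaussI (-stdGaussQuantile p) p := by
  have hφ := gaussianPDFReal_pos 0 1 (stdGaussQuantile p) one_ne_zero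
  have h := (hasDerivAt_gaussianPDFReal_zero_one _).comp p (hasDerivAt_stdGaussQuantile hp)
  rw [mul_assoc, mul_inv_cancel₀ hφ.ne', mul_one] at h
  exact h.congr_of_eventuallyEq <| by
    filter_upwards [Ioo_mem_nhds hp.1 hp.2] with q hq using gaussI_eq hq

theorem hasDerivAt_deriv_gaussI {p : ℝ} (hp : p ∈ Ioo 0 1) :
    HasDerivAt (deriv gaussI) (-(gaussI p)⁻¹) p := by
  rw [gaussI_eq hp]
  exact (hasDerivAt_stdGaussQuantile hp).neg.congr_of_eventuallyEq <| by
    filter_upwards [Ioo_mem_nhds hp.1 hp.2] with q hq using (hasDerivAt_gaussI hq).deriv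

theorem concaveOn_gaussI_add_sq :
    ConcaveOn ℝ (Ioo 0 1) fun q => gaussI q + √(2 * π) * q ^ 2 / 2 := by
  have hquad := hasDerivAt_mul_sq_div_two √(2 * π)
  refine concaveOn_of_hasDerivWithinAt2_nonpos (convex_Ioo 0 1)
    (f' := fun q => deriv gaussI q + √(2 * π) * q) (f'' := fun q => -(gaussI q)⁻¹ + √(2 * π))
    (fun q hq =>
      ((hasDerivAt_gaussI hq).continuousAt.add (hquad q).continuousAt).continuousWithinAt)
    (fun q hq => ?_) (fun q hq => ?_) (fun q hq => ?_) <;> rw [interior_Ioo] at hq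
  · exact ((hasDerivAt_gaussI hq).differentiableAt.hasDerivAt.add (hquad q)).hasDerivWithinAt
  · exact ((hasDerivAt_deriv_gaussI hq).add
      ((hasDerivAt_id q).const_mul √(2 * π))).hasDerivWithinAt.congr_deriv (by simp)
  · have := inv_anti₀ (gaussI_pos hq) (gaussI_le hq)
    rw [inv_inv] at this
    linarith

theorem gaussI_le_tangent_sub_sq {a b : ℝ} (ha : a ∈ Icc 0 1) (hb : b ∈ Ioo 0 1) :
    gaussI a ≤ gaussI b + deriv gaussI b * (a - b) - √(2 * π) * (a - b) ^ 2 / 2 := by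
  set T : ℝ → ℝ := fun a => gaussI b + deriv gaussI b * (a - b) - √(2 * π) * (a - b) ^ 2 / 2
  have hinterior : ∀ a ∈ Ioo 0 1, gaussI a ≤ T a := fun a ha' => by
    have := concaveOn_gaussI_add_sq.le_add_mul_sub_of_hasDerivAt hb ha'
      ((hasDerivAt_gaussI hb).differentiableAt.hasDerivAt.add (hasDerivAt_mul_sq_div_two _ b))
    simp only [T]
    linear_combination this
  by_cases ha' : a ∈ Ioo 0 1
  · exact hinterior a ha'
  -- at the endpoints `I` vanishes, and `T ≥ I > 0` inside extends to `[0, 1]` by continuity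
  have hendpoint : a = 0 ∨ a = 1 := by
    have h : a ∈ Icc 0 1 \ Ioo 0 1 := ⟨ha, ha'⟩
    rwa [Icc_sdiff_Ioo_same zero_le_one, mem_insert_iff, mem_singleton_iff] at h
  have hT : Icc 0 1 ⊆ {a | 0 ≤ T a} := by
    rw [← closure_Ioo zero_ne_one]
    exact closure_minimal (fun a ha => (gaussI_pos ha).le.trans (hinterior a ha))
      (isClosed_le continuous_const (by fun_prop))
  rw [gaussI, if_pos hendpoint]
  exact hT ha

theorem exists_tangent_sub_sq_lt_gaussI {k : ℝ} (hk : √(2 * π) < k) :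
    ∃ a ∈ Icc (0 : ℝ) 1, ∃ b ∈ Ioo (0 : ℝ) 1,
      gaussI b + deriv gaussI b * (a - b) - k * (a - b) ^ 2 / 2 < gaussI a := by
  set b := stdGaussCDF 0
  have hb : b ∈ Ioo 0 1 := stdGaussCDF_mem_Ioo 0
  set F : ℝ → ℝ := fun a => gaussI a + deriv gaussI b * (b - a) + k * (a - b) ^ 2 / 2
  set F' : ℝ → ℝ := fun a => deriv gaussI a - deriv gaussI b + k * (a - b)
  have hF : ∀ᶠ a in 𝓝 b, HasDerivAt F (F' a) a := by
    filter_upwards [Ioo_mem_nhds hb.1 hb.2] with a ha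
    exact (((hasDerivAt_gaussI ha).differentiableAt.hasDerivAt.add
      (((hasDerivAt_const a b).sub (hasDerivAt_id' a)).const_mul (deriv gaussI b))).add
      ((((hasDerivAt_id' a).sub_const b).pow 2).const_mul k |>.div_const 2)).congr_deriv
      (by simp only [F']; push_cast; ring)
  have hF' : HasDerivAt F' (-(gaussI b)⁻¹ + k) b :=
    (((hasDerivAt_deriv_gaussI hb).sub_const (deriv gaussI b)).add
      (((hasDerivAt_id' b).sub_const b).const_mul k)).congr_deriv (by simp)
  have hF'' : 0 < -(gaussI b)⁻¹ + k := by
    rw [gaussI_stdGaussCDF_zero, inv_inv]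
    linarith
  obtain ⟨a, hFa, ha⟩ := ((eventually_nhdsGT_lt_of_deriv_deriv_pos hF hF' hF'' (by simp [F'])).and
    (nhdsWithin_le_nhds (Ioo_mem_nhds hb.1 hb.2))).exists
  refine ⟨a, Ioo_subset_Icc_self ha, b, hb, ?_⟩
  simp only [F] at hFa
  linarith

/-- (i) For all `a ∈ [0,1]` and `b ∈ (0,1)`,
`I(b) − I(a) − I′(b)(b − a) − √(2π)(a − b)²/2 ≥ 0`.
(ii) The constant `√(2π)` is largest possible: for every `k > √(2π)` there are
`a ∈ [0,1]`, `b ∈ (0,1)` making the corresponding expression negative. -/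
theorem two_point_inequality_sharp_constant :
    (∀ a ∈ Set.Icc (0 : ℝ) 1, ∀ b ∈ Set.Ioo (0 : ℝ) 1,
      0 ≤ gaussI b - gaussI a - deriv gaussI b * (b - a)
            - Real.sqrt (2 * Real.pi) * (a - b) ^ 2 / 2) ∧
    (∀ k : ℝ, Real.sqrt (2 * Real.pi) < k →
      ∃ a ∈ Set.Icc (0 : ℝ) 1, ∃ b ∈ Set.Ioo (0 : ℝ) 1,
        gaussI b - gaussI a - deriv gaussI b * (b - a) - k * (a - b) ^ 2 / 2 < 0) := by
  refine ⟨fun a ha b hb => ?_, fun k hk => ?_⟩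
  · linarith [gaussI_le_tangent_sub_sq ha hb]
  · obtain ⟨a, ha, b, hb, hlt⟩ := exists_tangent_sub_sq_lt_gaussI hk
    exact ⟨a, ha, b, hb, by linarith⟩
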